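/- Let P, Q, R be bounded projectors on a Banach space E such that P - Q and Q - R are compact. Define the relative dimension [P - Q] as the Fredholm index of Q restricted to range(P), viewed as an operator into range(Q). Then [P - R] = [P - Q] + [Q - R]. -/

import Mathlib

/-!
Write `A = Q|: ran P → ran Q`, `A' = P|: ran Q → ran P`, `B`, `B'` likewise for `(Q, R)`, and
`C = R|: ran P → ran R`. As `P - Q` and `Q - R` are compact, each of `A'A`, `AA'`, `B'B`, `BB'`,
`(A'B')C` and `C(A'B')` is the identity plus a compact operator on the range of a projection.
Such an operator has index zero, so additivity of the index gives `ind A' = -ind A`,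
`ind B' = -ind B` and `ind C = -ind (A'B') = ind A + ind B`.

Index zero for `T = 1 + K`, `K` compact, comes from the Fredholm alternative (injective ⇔
surjective; for the converse direction apply it to a bounded right inverse of `T`). Let `C'` be
an algebraic complement of `range T`. Every linear `φ : ker T → C'`, extended by zero along a
closed complement of the finite-dimensional `ker T`, gives a finite-rank perturbation `T + φ`,
again of the form `1 + compact`, which is injective iff `φ` is and surjective iff `φ` is. So
every `φ : ker T → C'` is injective iff surjective, which forces `ker T ≃ C' ≃ E ⧸ range T`.
-/

open Module

/-- A bounded operator between Banach spaces is Fredholm if its range is closed and its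
kernel and cokernel are finite-dimensional. -/
def IsFredholm {E F : Type*} [NormedAddCommGroup E] [NormedSpace ℂ E]
    [NormedAddCommGroup F] [NormedSpace ℂ F] (T : E →L[ℂ] F) : Prop :=
  IsClosed (LinearMap.range (T : E →ₗ[ℂ] F) : Set F) ∧ FiniteDimensional ℂ (LinearMap.ker (T : E →ₗ[ℂ] F)) ∧
    FiniteDimensional ℂ (F ⧸ LinearMap.range (T : E →ₗ[ℂ] F))

/-- The Fredholm index of a bounded operator. -/
noncomputable def fredIndex {E F : Type*} [NormedAddCommGroup E] [NormedSpace ℂ E]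
    [NormedAddCommGroup F] [NormedSpace ℂ F] (T : E →L[ℂ] F) : ℤ :=
  (finrank ℂ (LinearMap.ker (T : E →ₗ[ℂ] F)) : ℤ) - finrank ℂ (F ⧸ LinearMap.range (T : E →ₗ[ℂ] F))

/-- The restriction of `Q` to an operator `range P → range Q`. -/
noncomputable def projRestrict {E : Type*} [NormedAddCommGroup E] [NormedSpace ℂ E]
    (P Q : E →L[ℂ] E) : ↥(LinearMap.range (P : E →ₗ[ℂ] E)) →L[ℂ] ↥(LinearMap.range (Q : E →ₗ[ℂ] E)) :=
  (Q.comp (LinearMap.range (P : E →ₗ[ℂ] E)).subtypeL).codRestrict (LinearMap.range (Q : E →ₗ[ℂ] E))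
    (fun _ => LinearMap.mem_range_self (Q : E →ₗ[ℂ] E) _)

/-- The relative dimension `[P - Q]`: the Fredholm index of the restriction of `Q` to an
operator `range P → range Q`. -/
noncomputable def relDim {E : Type*} [NormedAddCommGroup E] [NormedSpace ℂ E]
    (P Q : E →L[ℂ] E) : ℤ :=
  fredIndex (projRestrict P Q)

open Function LinearMap

universe u v

theorem nonempty_linearEquiv_of_forall_injective_iff_surjective {K : Type*} {M : Type u}
    {N : Type v} [Field K] [AddCommGroup M] [Module K M] [AddCommGroup N] [Module K N]
    (h : ∀ f : M →ₗ[K] N, Injective f ↔ Surjective f) : Nonempty (M ≃ₗ[K] N) := by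
  rcases le_total (Cardinal.lift.{v} (Module.rank K M)) (Cardinal.lift.{u} (Module.rank K N))
    with hle | hle
  · obtain ⟨f, hf⟩ := lift_rank_le_iff_exists_linearMap.mp hle
    exact ⟨.ofBijective f ⟨hf, (h f).mp hf⟩⟩
  · obtain ⟨g, hg⟩ := lift_rank_le_iff_exists_linearMap.mp hle
    obtain ⟨f, hfg⟩ := g.exists_leftInverse_of_injective (ker_eq_bot.mpr hg)
    have hf : Surjective f := fun y ↦ ⟨g y, LinearMap.congr_fun hfg y⟩
    exact ⟨.ofBijective f ⟨(h f).mpr hf, hf⟩⟩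

namespace LinearMap

variable {R X Y : Type*} [Ring R] [AddCommGroup X] [Module R X] [AddCommGroup Y] [Module R Y]
  {T : X →ₗ[R] Y} {p : X →ₗ[R] ker T} {C : Submodule R Y} (φ : ker T →ₗ[R] C)

theorem injective_add_subtype_comp_iff (hp : ∀ x : ker T, p x = x) (hC : IsCompl (range T) C) :
    Injective (T + C.subtype ∘ₗ φ ∘ₗ p) ↔ Injective φ := by
  constructor
  · intro h
    have : C.subtype ∘ φ = (T + C.subtype ∘ₗ φ ∘ₗ p) ∘ (ker T).subtype := by
      funext x; simp [hp]
    exact Injective.of_comp (f := C.subtype) (this ▸ h.comp Subtype.val_injective)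
  · intro hφ
    rw [← ker_eq_bot, eq_bot_iff]
    intro x hx
    have hx0 : T x = 0 := Submodule.disjoint_def.mp hC.disjoint _ (mem_range_self T x)
      (eq_neg_of_add_eq_zero_left hx ▸ C.neg_mem (φ (p x)).2)
    have hpx : p x = ⟨x, hx0⟩ := hp ⟨x, hx0⟩
    have : φ (p x) = 0 := by
      ext; simpa [hx0] using hx
    rw [hpx, ← map_zero φ] at this
    simpa using congrArg Subtype.val (hφ this)

theorem surjective_add_subtype_comp_iff (hp : ∀ x : ker T, p x = x) (hC : IsCompl (range T) C) :
    Surjective (T + C.subtype ∘ₗ φ ∘ₗ p) ↔ Surjective φ := by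
  constructor
  · intro h c
    obtain ⟨x, hx⟩ := h c
    have hx0 : T x = 0 := Submodule.disjoint_def.mp hC.disjoint _ (mem_range_self T x)
      (eq_sub_of_add_eq hx ▸ C.sub_mem c.2 (φ (p x)).2)
    refine ⟨p x, ?_⟩
    ext; simpa [hx0] using hx
  · intro hφ y
    obtain ⟨_, ⟨z, rfl⟩, c, hc, rfl⟩ :=
      Submodule.mem_sup.mp (hC.sup_eq_top ▸ Submodule.mem_top (x := y))
    obtain ⟨k, hk⟩ := hφ ⟨c, hc⟩
    refine ⟨z - p z + k, ?_⟩
    simp [hp, hk]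

end LinearMap

namespace ContinuousLinearMap

section CompactPerturbationOfOne

variable {𝕜 X : Type*} [RCLike 𝕜] [NormedAddCommGroup X] [NormedSpace 𝕜 X] {T : X →L[𝕜] X}

theorem finiteDimensional_ker_of_isCompactOperator_sub_one (hT : IsCompactOperator ⇑(T - 1)) :
    FiniteDimensional 𝕜 (ker (T : X →ₗ[𝕜] X)) := by
  have hmaps : ∀ x ∈ ker (T : X →ₗ[𝕜] X), (T - 1 : X →L[𝕜] X) x ∈ ker (T : X →ₗ[𝕜] X) :=
    fun x hx ↦ by simp_all
  have hneg : -⇑(((T - 1 : X →L[𝕜] X) : X →ₗ[𝕜] X).restrict hmaps) = id := by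
    funext x; ext; simp
  exact .of_isCompactOperator_id (𝕜 := 𝕜) (hneg ▸ (hT.restrict hmaps T.isClosed_ker).neg)

variable [CompleteSpace X]

theorem surjective_of_injective_of_isCompactOperator_sub_one (hT : IsCompactOperator ⇑(T - 1))
    (hinj : Injective T) : Surjective T := by
  rcases hT.hasEigenvalue_or_mem_resolventSet (μ := (-1 : 𝕜)) (by simp) with h | h
  · obtain ⟨x, hx⟩ := h.exists_hasEigenvector
    have hTx : T x = 0 := by simpa using hx.apply_eq_smul
    exact absurd (hinj (hTx.trans T.map_zero.symm)) hx.2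
  · rw [spectrum.mem_resolventSet_iff, map_neg, map_one, show -1 - (T - 1) = -T by abel,
      IsUnit.neg_iff, isUnit_iff_bijective] at h
    exact h.2

theorem injective_of_surjective_of_isCompactOperator_sub_one (hT : IsCompactOperator ⇑(T - 1))
    (hsurj : Surjective T) : Injective T := by
  have := finiteDimensional_ker_of_isCompactOperator_sub_one hT
  obtain ⟨p, hp⟩ := Submodule.ClosedComplemented.of_finiteDimensional (ker (T : X →ₗ[𝕜] X))
  let e := T.equivProdOfSurjectiveOfIsCompl p (range_eq_top.mpr hsurj)
    (range_eq_top.mpr fun x ↦ ⟨x, hp x⟩) (isCompl_of_proj hp)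
  let S : X →L[𝕜] X := e.symm.toContinuousLinearMap ∘L inl 𝕜 X _
  have hTS : LeftInverse T S := fun y ↦ congrArg Prod.fst (e.apply_symm_apply (y, 0))
  have hS : IsCompactOperator ⇑(S - 1) := by
    have : S - 1 = -((T - 1) ∘L S) := by ext y; simp [hTS y]
    rw [this]
    exact (hT.comp_clm S).neg
  exact (hTS.rightInverse_of_surjective
    (surjective_of_injective_of_isCompactOperator_sub_one hS hTS.injective)).injective

theorem injective_iff_surjective_of_isCompactOperator_sub_one (hT : IsCompactOperator ⇑(T - 1)) :
    Injective T ↔ Surjective T :=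
  ⟨surjective_of_injective_of_isCompactOperator_sub_one hT,
    injective_of_surjective_of_isCompactOperator_sub_one hT⟩

theorem nonempty_ker_equiv_quotient_range_of_isCompactOperator_sub_one
    (hT : IsCompactOperator ⇑(T - 1)) :
    Nonempty (ker (T : X →ₗ[𝕜] X) ≃ₗ[𝕜] X ⧸ range (T : X →ₗ[𝕜] X)) := by
  have := finiteDimensional_ker_of_isCompactOperator_sub_one hT
  obtain ⟨p, hp⟩ := Submodule.ClosedComplemented.of_finiteDimensional (ker (T : X →ₗ[𝕜] X))
  obtain ⟨C, hC⟩ := (range (T : X →ₗ[𝕜] X)).exists_isCompl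
  suffices Nonempty (ker (T : X →ₗ[𝕜] X) ≃ₗ[𝕜] C) from
    this.map (·.trans (Submodule.quotientEquivOfIsCompl _ _ hC).symm)
  refine nonempty_linearEquiv_of_forall_injective_iff_surjective fun φ ↦ ?_
  let φ' : ker (T : X →ₗ[𝕜] X) →L[𝕜] X := toContinuousLinearMap (C.subtype ∘ₗ φ)
  let F : X →L[𝕜] X := φ'.comp p
  have hF : IsCompactOperator ⇑F := (isCompactOperator_of_locallyCompactSpace_rng φ').comp_clm p
  have hTF : IsCompactOperator ⇑(T + F - 1) := by
    rw [add_sub_right_comm]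
    exact hT.add hF
  rw [← injective_add_subtype_comp_iff φ hp hC, ← surjective_add_subtype_comp_iff φ hp hC]
  exact injective_iff_surjective_of_isCompactOperator_sub_one hTF

theorem finiteDimensional_quotient_range_of_isCompactOperator_sub_one
    (hT : IsCompactOperator ⇑(T - 1)) : FiniteDimensional 𝕜 (X ⧸ range (T : X →ₗ[𝕜] X)) :=
  have := finiteDimensional_ker_of_isCompactOperator_sub_one hT
  (nonempty_ker_equiv_quotient_range_of_isCompactOperator_sub_one hT).some.finiteDimensional

theorem index_eq_zero_of_isCompactOperator_sub_one (hT : IsCompactOperator ⇑(T - 1)) :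
    (T : X →ₗ[𝕜] X).index = 0 := by
  rw [index, (nonempty_ker_equiv_quotient_range_of_isCompactOperator_sub_one hT).some.finrank_eq,
    sub_self]

end CompactPerturbationOfOne

section QuasiInverse

variable {𝕜 Y Z V : Type*} [RCLike 𝕜] [NormedAddCommGroup Y] [NormedSpace 𝕜 Y]
  [NormedAddCommGroup Z] [NormedSpace 𝕜 Z] [NormedAddCommGroup V] [NormedSpace 𝕜 V]
  {A : Y →L[𝕜] Z} {A' : Z →L[𝕜] Y} {B : Z →L[𝕜] V} {B' : V →L[𝕜] Z}

theorem finiteDimensional_ker_of_isCompactOperator_comp_sub_one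
    (h : IsCompactOperator ⇑(A' ∘L A - 1)) : FiniteDimensional 𝕜 (ker (A : Y →ₗ[𝕜] Z)) :=
  have := finiteDimensional_ker_of_isCompactOperator_sub_one h
  Submodule.finiteDimensional_of_le (ker_le_ker_comp (A : Y →ₗ[𝕜] Z) (A' : Z →ₗ[𝕜] Y) |>.trans_eq
    (congrArg ker (toLinearMap_comp A' A).symm))

theorem finiteDimensional_quotient_range_of_isCompactOperator_comp_sub_one [CompleteSpace Z]
    (h : IsCompactOperator ⇑(A ∘L A' - 1)) : FiniteDimensional 𝕜 (Z ⧸ range (A : Y →ₗ[𝕜] Z)) := by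
  have := finiteDimensional_quotient_range_of_isCompactOperator_sub_one h
  rw [toLinearMap_comp] at this
  exact Module.Finite.of_surjective _ (Submodule.factor_surjective
    (range_comp_le_range (A' : Z →ₗ[𝕜] Y) (A : Y →ₗ[𝕜] Z)))

theorem index_add_index_eq_zero_of_isCompactOperator [CompleteSpace Y] [CompleteSpace Z]
    (h₁ : IsCompactOperator ⇑(A' ∘L A - 1)) (h₂ : IsCompactOperator ⇑(A ∘L A' - 1)) :
    (A' : Z →ₗ[𝕜] Y).index + (A : Y →ₗ[𝕜] Z).index = 0 := by
  have := finiteDimensional_ker_of_isCompactOperator_comp_sub_one h₁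
  have := finiteDimensional_ker_of_isCompactOperator_comp_sub_one h₂
  have := finiteDimensional_quotient_range_of_isCompactOperator_comp_sub_one h₁
  have := finiteDimensional_quotient_range_of_isCompactOperator_comp_sub_one h₂
  rw [← index_comp, ← toLinearMap_comp]
  exact index_eq_zero_of_isCompactOperator_sub_one h₁

theorem index_comp_of_isCompactOperator [CompleteSpace Z] [CompleteSpace V]
    (hA₁ : IsCompactOperator ⇑(A' ∘L A - 1)) (hA₂ : IsCompactOperator ⇑(A ∘L A' - 1))
    (hB₁ : IsCompactOperator ⇑(B' ∘L B - 1)) (hB₂ : IsCompactOperator ⇑(B ∘L B' - 1)) :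
    ((B ∘L A : Y →L[𝕜] V) : Y →ₗ[𝕜] V).index =
      (B : Z →ₗ[𝕜] V).index + (A : Y →ₗ[𝕜] Z).index := by
  have := finiteDimensional_ker_of_isCompactOperator_comp_sub_one hA₁
  have := finiteDimensional_ker_of_isCompactOperator_comp_sub_one hB₁
  have := finiteDimensional_quotient_range_of_isCompactOperator_comp_sub_one hA₂
  have := finiteDimensional_quotient_range_of_isCompactOperator_comp_sub_one hB₂
  rw [toLinearMap_comp, index_comp]

theorem index_eq_add_of_isCompactOperator [CompleteSpace Y] [CompleteSpace Z] [CompleteSpace V]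
    {C : Y →L[𝕜] V}
    (hA₁ : IsCompactOperator ⇑(A' ∘L A - 1)) (hA₂ : IsCompactOperator ⇑(A ∘L A' - 1))
    (hB₁ : IsCompactOperator ⇑(B' ∘L B - 1)) (hB₂ : IsCompactOperator ⇑(B ∘L B' - 1))
    (hC₁ : IsCompactOperator ⇑((A' ∘L B') ∘L C - 1))
    (hC₂ : IsCompactOperator ⇑(C ∘L (A' ∘L B') - 1)) :
    (C : Y →ₗ[𝕜] V).index = (A : Y →ₗ[𝕜] Z).index + (B : Z →ₗ[𝕜] V).index := by
  have hA := index_add_index_eq_zero_of_isCompactOperator hA₁ hA₂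
  have hB := index_add_index_eq_zero_of_isCompactOperator hB₁ hB₂
  have hC := index_add_index_eq_zero_of_isCompactOperator hC₁ hC₂
  rw [index_comp_of_isCompactOperator hB₂ hB₁ hA₂ hA₁] at hC
  omega

end QuasiInverse

section Compression

variable {𝕜 E : Type*} [NontriviallyNormedField 𝕜] [NormedAddCommGroup E] [NormedSpace 𝕜 E]
  {P Q R W : E →L[𝕜] E}

theorem isCompactOperator_sub_one_of_compression (hP : IsIdempotentElem P)
    (hW : IsCompactOperator ⇑(W - P))
    (F : range (P : E →ₗ[𝕜] E) →L[𝕜] range (P : E →ₗ[𝕜] E)) (hF : ∀ x, (F x : E) = P (W x)) :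
    IsCompactOperator ⇑(F - 1) := by
  have hmaps : ∀ x : range (P : E →ₗ[𝕜] E), P ((W - P) x) ∈ range (P : E →ₗ[𝕜] E) :=
    fun x ↦ mem_range_self _ _
  have := ((hW.clm_comp P).comp_clm (range (P : E →ₗ[𝕜] E)).subtypeL).codRestrict hmaps
    (IsIdempotentElem.isClosed_range hP)
  have heq : ⇑(F - 1) =
      Set.codRestrict (⇑P ∘ ⇑(W - P) ∘ (range (P : E →ₗ[𝕜] E)).subtypeL) _ hmaps := by
    funext x
    have hx : P x = x := (IsIdempotentElem.toLinearMap hP).mem_range_iff.mp x.2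
    ext; simp [hF, hx]
  rwa [heq]

theorem isCompactOperator_mul_sub_of_isIdempotentElem_right (hQ : IsIdempotentElem Q)
    (hPQ : IsCompactOperator ⇑(P - Q)) (hQR : IsCompactOperator ⇑(Q - R)) :
    IsCompactOperator ⇑(P * Q - R) := by
  rw [show P * Q - R = (P - Q) * Q + (Q - R) by rw [sub_mul, hQ.eq]; abel]
  exact (hPQ.comp_clm Q).add hQR

theorem isCompactOperator_mul_sub_of_isIdempotentElem_left (hQ : IsIdempotentElem Q)
    (hPQ : IsCompactOperator ⇑(P - Q)) (hQR : IsCompactOperator ⇑(Q - R)) :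
    IsCompactOperator ⇑(Q * P - R) := by
  rw [show Q * P - R = Q * (P - Q) + (Q - R) by rw [mul_sub, hQ.eq]; abel]
  exact (hPQ.clm_comp Q).add hQR

end Compression

end ContinuousLinearMap

open ContinuousLinearMap

theorem relDim_eq_index {E : Type*} [NormedAddCommGroup E] [NormedSpace ℂ E] (P Q : E →L[ℂ] E) :
    relDim P Q = (projRestrict P Q : range (P : E →ₗ[ℂ] E) →ₗ[ℂ] range (Q : E →ₗ[ℂ] E)).index :=
  rfl

theorem relDim_add
    {E : Type*} [NormedAddCommGroup E] [NormedSpace ℂ E] [CompleteSpace E]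
    (P Q R : E →L[ℂ] E) (hP : P * P = P) (hQ : Q * Q = Q) (hR : R * R = R)
    (hPQ : IsCompactOperator ⇑(P - Q)) (hQR : IsCompactOperator ⇑(Q - R)) :
    relDim P R = relDim P Q + relDim Q R := by
  have hQP : IsCompactOperator ⇑(Q - P) := neg_sub P Q ▸ hPQ.neg
  have hRQ : IsCompactOperator ⇑(R - Q) := neg_sub Q R ▸ hQR.neg
  have := (IsIdempotentElem.isClosed_range hP).completeSpace_coe
  have := (IsIdempotentElem.isClosed_range hQ).completeSpace_coe
  have := (IsIdempotentElem.isClosed_range hR).completeSpace_coe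
  rw [relDim_eq_index, relDim_eq_index, relDim_eq_index]
  exact index_eq_add_of_isCompactOperator (A' := projRestrict Q P) (B' := projRestrict R Q)
    (isCompactOperator_sub_one_of_compression hP hQP _ fun _ ↦ rfl)
    (isCompactOperator_sub_one_of_compression hQ hPQ _ fun _ ↦ rfl)
    (isCompactOperator_sub_one_of_compression hQ hRQ _ fun _ ↦ rfl)
    (isCompactOperator_sub_one_of_compression hR hQR _ fun _ ↦ rfl)
    (isCompactOperator_sub_one_of_compression (W := Q * R) hP
      (isCompactOperator_mul_sub_of_isIdempotentElem_left hQ hRQ hQP) _ fun _ ↦ rfl)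
    (isCompactOperator_sub_one_of_compression (W := P * Q) hR
      (isCompactOperator_mul_sub_of_isIdempotentElem_right hQ hPQ hQR) _ fun _ ↦ rfl)
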